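/- arXiv:2307.10406 — 2 statements merged into one kernel-verified Lean document; each statement's English description precedes it below -/
import Mathlib

section
/- Fix a bipartition λ of n with λ^(2) = ∅, and a semistandard tableau S of shape λ and some type μ. Then unstacking after the first row gives a bijection from the set of standard tableaux s of shape λ with μ(s) = S onto the set of standard tableaux s' of shape U(λ) = ((λ_1), (λ_2, ..., λ_ℓ)) with μ(s') = U(S), with inverse given by stacking. -/
open Finset

/-!
Unstacking only relabels boxes: `(1, b) ↦ ((1, b), 0)` and `(a + 1, b) ↦ ((a, b), 1)` is a
bijection from the boxes of `λ` onto those of `U(λ)` that keeps rows, and keeps columns except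
for the adjacencies between rows 1 and 2 of `λ`, which `U(λ)` forgets. Hence unstacking preserves
standardness, and stacking does as soon as each entry of the first row is smaller than the entry
below it. This is where the type enters: `S` is column-strict, and the recording map of `t^μ`
reflects the strict order, a smaller letter recording a smaller entry.
-/

/-- Boxes of the Young diagram of the partition `(λ_1,...,λ_ℓ)` (rows are 1-indexed). -/
def IsBox (lam : ℕ → ℕ) (ℓ : ℕ) (p : ℕ × ℕ) : Prop :=
  1 ≤ p.1 ∧ p.1 ≤ ℓ ∧ 1 ≤ p.2 ∧ p.2 ≤ lam p.1

/-- Boxes of a bipartition whose components have row lengths `sh · 0` and `sh · 1`. -/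
def IsBBox (sh : ℕ → Fin 2 → ℕ) (q : (ℕ × ℕ) × Fin 2) : Prop :=
  1 ≤ q.1.1 ∧ 1 ≤ q.1.2 ∧ q.1.2 ≤ sh q.1.1 q.2

/-- The shape `U(λ) = ((λ_1), (λ_2, ..., λ_ℓ))`. -/
def Ushape (lam : ℕ → ℕ) : ℕ → Fin 2 → ℕ :=
  fun a c => if c = 0 then (if a = 1 then lam 1 else 0) else lam (a + 1)

/-- A standard tableau of (one-component) shape `λ` with entries `1, ..., n`:
an injective filling onto `{1,...,n}` increasing along rows and down columns. -/
def IsStdTab (lam : ℕ → ℕ) (ℓ n : ℕ) (s : ℕ × ℕ → ℕ) : Prop :=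
  (∀ p q, IsBox lam ℓ p → IsBox lam ℓ q → s p = s q → p = q) ∧
  (∀ p, IsBox lam ℓ p → 1 ≤ s p ∧ s p ≤ n) ∧
  (∀ j, 1 ≤ j → j ≤ n → ∃ p, IsBox lam ℓ p ∧ s p = j) ∧
  (∀ a b, IsBox lam ℓ (a, b) → IsBox lam ℓ (a, b + 1) → s (a, b) < s (a, b + 1)) ∧
  (∀ a b, IsBox lam ℓ (a, b) → IsBox lam ℓ (a + 1, b) → s (a, b) < s (a + 1, b))

/-- A standard tableau of bipartition shape `sh`: entries `1,...,n` each once, increasing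
along the rows and down the columns of each component. -/
def IsStdBTab (sh : ℕ → Fin 2 → ℕ) (n : ℕ) (s : (ℕ × ℕ) × Fin 2 → ℕ) : Prop :=
  (∀ p q, IsBBox sh p → IsBBox sh q → s p = s q → p = q) ∧
  (∀ p, IsBBox sh p → 1 ≤ s p ∧ s p ≤ n) ∧
  (∀ j, 1 ≤ j → j ≤ n → ∃ p, IsBBox sh p ∧ s p = j) ∧
  (∀ a b c, IsBBox sh ((a, b), c) → IsBBox sh ((a, b + 1), c) →
    s ((a, b), c) < s ((a, b + 1), c)) ∧
  (∀ a b c, IsBBox sh ((a, b), c) → IsBBox sh ((a + 1, b), c) →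
    s ((a, b), c) < s ((a + 1, b), c))

/-- The order on the two-alphabet letters `i_k` (letters of the first alphabet `k = 0`
come before those of the second `k = 1`, and within an alphabet by index). -/
def letterLE (x y : ℕ × Fin 2) : Prop := x.2 < y.2 ∨ (x.2 = y.2 ∧ x.1 ≤ y.1)

def letterLT (x y : ℕ × Fin 2) : Prop := x.2 < y.2 ∨ (x.2 = y.2 ∧ x.1 < y.1)

/-- Semistandardness for a tableau of shape `λ` with two-alphabet entries:
rows weakly increase, columns strictly increase. -/
def IsSemistdTab (lam : ℕ → ℕ) (ℓ : ℕ) (S : ℕ × ℕ → ℕ × Fin 2) : Prop :=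
  (∀ a b, IsBox lam ℓ (a, b) → IsBox lam ℓ (a, b + 1) → letterLE (S (a, b)) (S (a, b + 1))) ∧
  (∀ a b, IsBox lam ℓ (a, b) → IsBox lam ℓ (a + 1, b) → letterLT (S (a, b)) (S (a + 1, b)))

/-- Unstacking a tableau of shape `λ` to one of shape `U(λ)`. -/
def unstack {α : Type*} (s : ℕ × ℕ → α) : (ℕ × ℕ) × Fin 2 → α :=
  fun q => if q.2 = 0 then s (1, q.1.2) else s (q.1.1 + 1, q.1.2)

/-- Stacking a tableau of shape `U(λ)` back to one of shape `λ`. -/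
def stack {α : Type*} (s' : (ℕ × ℕ) × Fin 2 → α) : ℕ × ℕ → α :=
  fun p => if p.1 = 1 then s' ((1, p.2), 0) else s' ((p.1 - 1, p.2), 1)

def unstackBox (q : (ℕ × ℕ) × Fin 2) : ℕ × ℕ :=
  if q.2 = 0 then (1, q.1.2) else (q.1.1 + 1, q.1.2)

def stackBox (p : ℕ × ℕ) : (ℕ × ℕ) × Fin 2 :=
  if p.1 = 1 then ((1, p.2), 0) else ((p.1 - 1, p.2), 1)

theorem unstack_eq_comp {α : Type*} (s : ℕ × ℕ → α) : unstack s = s ∘ unstackBox := by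
  funext q
  simp only [unstack, unstackBox, Function.comp, apply_ite s]

theorem stack_eq_comp {α : Type*} (s' : (ℕ × ℕ) × Fin 2 → α) : stack s' = s' ∘ stackBox := by
  funext p
  simp only [stack, stackBox, Function.comp, apply_ite s']

section Boxes

variable {lam : ℕ → ℕ} {ℓ : ℕ}

theorem le_length_of_pos (hzero : ∀ a, ℓ < a → lam a = 0) {a : ℕ} (ha : 0 < lam a) : a ≤ ℓ :=
  not_lt.mp fun h => ha.ne' (hzero a h)

theorem isBBox_Ushape_zero_iff (hzero : ∀ a, ℓ < a → lam a = 0) {a b : ℕ} :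
    IsBBox (Ushape lam) ((a, b), 0) ↔ a = 1 ∧ IsBox lam ℓ (1, b) := by
  have := le_length_of_pos hzero (a := 1)
  grind [IsBBox, IsBox, Ushape]

theorem isBBox_Ushape_one_iff (hzero : ∀ a, ℓ < a → lam a = 0) {a b : ℕ} :
    IsBBox (Ushape lam) ((a, b), 1) ↔ 1 ≤ a ∧ IsBox lam ℓ (a + 1, b) := by
  have := le_length_of_pos hzero (a := a + 1)
  grind [IsBBox, IsBox, Ushape]

theorem stackBox_unstackBox {q : (ℕ × ℕ) × Fin 2} (hq : IsBBox (Ushape lam) q) :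
    stackBox (unstackBox q) = q := by
  obtain ⟨⟨_ | _ | a, b⟩, c⟩ := q
  · exact absurd hq.1 (by simp)
  · fin_cases c <;> simp [stackBox, unstackBox]
  · fin_cases c
    · grind [IsBBox, Ushape]
    · simp [stackBox, unstackBox]

theorem unstackBox_stackBox {p : ℕ × ℕ} (hp : 1 ≤ p.1) : unstackBox (stackBox p) = p := by
  obtain ⟨_ | _ | a, b⟩ := p
  · exact absurd hp (by omega)
  all_goals simp [stackBox, unstackBox]

theorem invOn_stackBox_unstackBox :
    Set.InvOn stackBox unstackBox {q | IsBBox (Ushape lam) q} {p | IsBox lam ℓ p} :=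
  ⟨fun _ hq => stackBox_unstackBox hq, fun _ hp => unstackBox_stackBox hp.1⟩

theorem bijOn_unstackBox (hzero : ∀ a, ℓ < a → lam a = 0) :
    Set.BijOn unstackBox {q | IsBBox (Ushape lam) q} {p | IsBox lam ℓ p} := by
  refine invOn_stackBox_unstackBox.bijOn ?_ ?_
  · rintro ⟨⟨a, b⟩, c⟩ hq
    fin_cases c
    · exact ((isBBox_Ushape_zero_iff hzero).mp hq).2
    · exact ((isBBox_Ushape_one_iff hzero).mp hq).2
  · rintro ⟨_ | _ | a, b⟩ hp
    · exact absurd hp.1 (by omega)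
    · simpa [stackBox, isBBox_Ushape_zero_iff hzero] using hp
    · simpa [stackBox, isBBox_Ushape_one_iff hzero] using hp

theorem bijOn_stackBox (hzero : ∀ a, ℓ < a → lam a = 0) :
    Set.BijOn stackBox {p | IsBox lam ℓ p} {q | IsBBox (Ushape lam) q} :=
  (bijOn_unstackBox hzero).symm invOn_stackBox_unstackBox.symm

end Boxes

theorem isStdTab_iff {lam : ℕ → ℕ} {ℓ n : ℕ} {s : ℕ × ℕ → ℕ} :
    IsStdTab lam ℓ n s ↔ Set.BijOn s {p | IsBox lam ℓ p} (Set.Icc 1 n) ∧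
      (∀ a b, IsBox lam ℓ (a, b) → IsBox lam ℓ (a, b + 1) → s (a, b) < s (a, b + 1)) ∧
      (∀ a b, IsBox lam ℓ (a, b) → IsBox lam ℓ (a + 1, b) → s (a, b) < s (a + 1, b)) := by
  simp only [IsStdTab, Set.BijOn, Set.MapsTo, Set.InjOn, Set.SurjOn, Set.subset_def,
    Set.mem_ofPred_eq, Set.mem_Icc, Set.mem_image]
  tauto

theorem isStdBTab_iff {sh : ℕ → Fin 2 → ℕ} {n : ℕ} {s : (ℕ × ℕ) × Fin 2 → ℕ} :
    IsStdBTab sh n s ↔ Set.BijOn s {q | IsBBox sh q} (Set.Icc 1 n) ∧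
      (∀ a b c, IsBBox sh ((a, b), c) → IsBBox sh ((a, b + 1), c) →
        s ((a, b), c) < s ((a, b + 1), c)) ∧
      (∀ a b c, IsBBox sh ((a, b), c) → IsBBox sh ((a + 1, b), c) →
        s ((a, b), c) < s ((a + 1, b), c)) := by
  simp only [IsStdBTab, Set.BijOn, Set.MapsTo, Set.InjOn, Set.SurjOn, Set.subset_def,
    Set.mem_ofPred_eq, Set.mem_Icc, Set.mem_image]
  tauto

section Transfer

variable {lam : ℕ → ℕ} {ℓ n : ℕ}

theorem isStdBTab_unstack (hzero : ∀ a, ℓ < a → lam a = 0) {s : ℕ × ℕ → ℕ}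
    (hs : IsStdTab lam ℓ n s) : IsStdBTab (Ushape lam) n (unstack s) := by
  obtain ⟨hbij, hrow, hcol⟩ := isStdTab_iff.mp hs
  refine isStdBTab_iff.mpr ⟨unstack_eq_comp s ▸ hbij.comp (bijOn_unstackBox hzero), ?_, ?_⟩
  · intro a b c hq hq'
    fin_cases c
    · obtain ⟨rfl, hB⟩ := (isBBox_Ushape_zero_iff hzero).mp hq
      simpa [unstack] using hrow 1 b hB ((isBBox_Ushape_zero_iff hzero).mp hq').2
    · obtain ⟨-, hB⟩ := (isBBox_Ushape_one_iff hzero).mp hq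
      simpa [unstack] using hrow (a + 1) b hB ((isBBox_Ushape_one_iff hzero).mp hq').2
  · intro a b c hq hq'
    fin_cases c
    · have ha : 1 ≤ a := hq.1
      have := ((isBBox_Ushape_zero_iff hzero).mp hq').1
      omega
    · obtain ⟨-, hB⟩ := (isBBox_Ushape_one_iff hzero).mp hq
      simpa [unstack] using hcol (a + 1) b hB ((isBBox_Ushape_one_iff hzero).mp hq').2

theorem isStdTab_stack (hzero : ∀ a, ℓ < a → lam a = 0) {s' : (ℕ × ℕ) × Fin 2 → ℕ}
    (hs' : IsStdBTab (Ushape lam) n s')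
    (hjunction : ∀ b, IsBox lam ℓ (1, b) → IsBox lam ℓ (2, b) → s' ((1, b), 0) < s' ((1, b), 1)) :
    IsStdTab lam ℓ n (stack s') := by
  obtain ⟨hbij, hrow, hcol⟩ := isStdBTab_iff.mp hs'
  refine isStdTab_iff.mpr ⟨stack_eq_comp s' ▸ hbij.comp (bijOn_stackBox hzero), ?_, ?_⟩
  · rintro (_ | _ | a) b hp hp'
    · exact absurd hp.1 (by omega)
    · simpa [stack] using hrow 1 b 0 ((isBBox_Ushape_zero_iff hzero).mpr ⟨rfl, hp⟩)
        ((isBBox_Ushape_zero_iff hzero).mpr ⟨rfl, hp'⟩)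
    · simpa [stack] using hrow (a + 1) b 1 ((isBBox_Ushape_one_iff hzero).mpr ⟨by omega, hp⟩)
        ((isBBox_Ushape_one_iff hzero).mpr ⟨by omega, hp'⟩)
  · rintro (_ | _ | a) b hp hp'
    · exact absurd hp.1 (by omega)
    · simpa [stack] using hjunction b hp hp'
    · simpa [stack] using hcol (a + 1) b 1 ((isBBox_Ushape_one_iff hzero).mpr ⟨by omega, hp⟩)
        ((isBBox_Ushape_one_iff hzero).mpr ⟨by omega, hp'⟩)

end Transfer

def IsRecordingMap (n : ℕ) (μ1 μ2 : ℕ → ℕ) (g : ℕ → ℕ × Fin 2) : Prop :=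
  (∀ j, 1 ≤ j → j ≤ n → ∀ i : ℕ,
    (g j = (i, 0) ↔
      (∑ i' ∈ Finset.Icc 1 (i - 1), μ1 i') < j ∧ j ≤ ∑ i' ∈ Finset.Icc 1 i, μ1 i')) ∧
  (∀ j, 1 ≤ j → j ≤ n → ∀ i : ℕ,
    (g j = (i, 1) ↔
      ((∑ i' ∈ Finset.Icc 1 n, μ1 i') + ∑ i' ∈ Finset.Icc 1 (i - 1), μ2 i') < j ∧
        j ≤ (∑ i' ∈ Finset.Icc 1 n, μ1 i') + ∑ i' ∈ Finset.Icc 1 i, μ2 i'))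

namespace IsRecordingMap

variable {n : ℕ} {μ1 μ2 : ℕ → ℕ} {g : ℕ → ℕ × Fin 2}

theorem sum_lt_of_snd_ne_zero (hg : IsRecordingMap n μ1 μ2 g) {j : ℕ} (hj : j ∈ Set.Icc 1 n)
    (hk : (g j).2 ≠ 0) (i : ℕ) : ∑ i' ∈ Finset.Icc 1 i, μ1 i' < j := by
  induction i with
  | zero => simpa [Nat.lt_iff_add_one_le] using hj.1
  | succ i ih =>
    by_contra! h
    exact hk (by rw [(hg.1 j hj.1 hj.2 (i + 1)).mpr ⟨by simpa using ih, h⟩])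

theorem lt_of_letterLT (hg : IsRecordingMap n μ1 μ2 g) {j1 j2 : ℕ} (hj1 : j1 ∈ Set.Icc 1 n)
    (hj2 : j2 ∈ Set.Icc 1 n) (h : letterLT (g j1) (g j2)) : j1 < j2 := by
  have sum_mono : ∀ (f : ℕ → ℕ) {i i' : ℕ}, i ≤ i' →
      ∑ x ∈ Finset.Icc 1 i, f x ≤ ∑ x ∈ Finset.Icc 1 i', f x :=
    fun _ _ _ h => Finset.sum_le_sum_of_subset (Finset.Icc_subset_Icc_right h)
  rcases h1 : g j1 with ⟨i1, k1⟩
  rcases h2 : g j2 with ⟨i2, k2⟩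
  rw [h1, h2] at h
  rcases h with hk | ⟨rfl, hi⟩
  · obtain ⟨rfl, rfl⟩ : k1 = 0 ∧ k2 = 1 :=
      (by decide : ∀ k k' : Fin 2, k < k' → k = 0 ∧ k' = 1) k1 k2 hk
    have := (hg.1 j1 hj1.1 hj1.2 i1).mp h1
    have := hg.sum_lt_of_snd_ne_zero hj2 (by simp [h2]) i1
    omega
  · fin_cases k1
    · have := (hg.1 j1 hj1.1 hj1.2 i1).mp h1
      have := (hg.1 j2 hj2.1 hj2.2 i2).mp h2
      have := sum_mono μ1 (show i1 ≤ i2 - 1 by omega)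
      omega
    · have := (hg.2 j1 hj1.1 hj1.2 i1).mp h1
      have := (hg.2 j2 hj2.1 hj2.2 i2).mp h2
      have := sum_mono μ2 (show i1 ≤ i2 - 1 by omega)
      omega

end IsRecordingMap

theorem stmt6_general (n ℓ : ℕ) (lam : ℕ → ℕ)
    -- λ = ((λ_1, ..., λ_ℓ), ∅) is a bipartition of n:
    (hzero : ∀ a, ℓ < a → lam a = 0)
    -- μ is a bicomposition and g is the recording map of the standard tableau t^μ:
    -- g j is the letter i_k such that j lies in row i of component k of t^μ
    (μ1 μ2 : ℕ → ℕ) (g : ℕ → ℕ × Fin 2)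
    (hg0 : ∀ j, 1 ≤ j → j ≤ n → ∀ i : ℕ,
      (g j = (i, 0) ↔
        (∑ i' ∈ Finset.Icc 1 (i - 1), μ1 i') < j ∧ j ≤ ∑ i' ∈ Finset.Icc 1 i, μ1 i'))
    (hg1 : ∀ j, 1 ≤ j → j ≤ n → ∀ i : ℕ,
      (g j = (i, 1) ↔
        ((∑ i' ∈ Finset.Icc 1 n, μ1 i') + ∑ i' ∈ Finset.Icc 1 (i - 1), μ2 i') < j ∧
          j ≤ (∑ i' ∈ Finset.Icc 1 n, μ1 i') + ∑ i' ∈ Finset.Icc 1 i, μ2 i'))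
    -- S is a semistandard tableau of shape λ and type μ:
    (S : ℕ × ℕ → ℕ × Fin 2)
    (hS : IsSemistdTab lam ℓ S) :
    -- unstacking maps standard tableaux of shape λ recording to S to standard tableaux
    -- of shape U(λ) recording to U(S), and stacking is a two-sided inverse:
    (∀ s : ℕ × ℕ → ℕ,
      IsStdTab lam ℓ n s → (∀ p, IsBox lam ℓ p → g (s p) = S p) →
      (IsStdBTab (Ushape lam) n (unstack s) ∧
        ∀ q, IsBBox (Ushape lam) q → g (unstack s q) = unstack S q)) ∧
    (∀ s' : (ℕ × ℕ) × Fin 2 → ℕ,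
      IsStdBTab (Ushape lam) n s' → (∀ q, IsBBox (Ushape lam) q → g (s' q) = unstack S q) →
      (IsStdTab lam ℓ n (stack s') ∧ ∀ p, IsBox lam ℓ p → g (stack s' p) = S p)) ∧
    (∀ s : ℕ × ℕ → ℕ, IsStdTab lam ℓ n s →
      ∀ p, IsBox lam ℓ p → stack (unstack s) p = s p) ∧
    (∀ s' : (ℕ × ℕ) × Fin 2 → ℕ, IsStdBTab (Ushape lam) n s' →
      ∀ q, IsBBox (Ushape lam) q → unstack (stack s') q = s' q) := by
  have hg : IsRecordingMap n μ1 μ2 g := ⟨hg0, hg1⟩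
  refine ⟨fun s hs hgs => ⟨isStdBTab_unstack hzero hs, fun q hq => ?_⟩,
    fun s' hs' hgs' => ⟨isStdTab_stack hzero hs' fun b h1 h2 => ?_, fun p hp => ?_⟩,
    fun s _ p hp => ?_, fun s' _ q hq => ?_⟩
  · rw [unstack_eq_comp, unstack_eq_comp]
    exact hgs _ ((bijOn_unstackBox hzero).mapsTo hq)
  · have hq1 : IsBBox (Ushape lam) ((1, b), 0) := (isBBox_Ushape_zero_iff hzero).mpr ⟨rfl, h1⟩
    have hq2 : IsBBox (Ushape lam) ((1, b), 1) := (isBBox_Ushape_one_iff hzero).mpr ⟨le_rfl, h2⟩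
    have hrange := (isStdBTab_iff.mp hs').1.mapsTo
    refine hg.lt_of_letterLT (hrange hq1) (hrange hq2) ?_
    rw [hgs' _ hq1, hgs' _ hq2]
    simpa [unstack] using hS.2 1 b h1 h2
  · rw [stack_eq_comp, Function.comp_apply, hgs' _ ((bijOn_stackBox hzero).mapsTo hp),
      unstack_eq_comp, Function.comp_apply, unstackBox_stackBox hp.1]
  · rw [stack_eq_comp, unstack_eq_comp, Function.comp_apply, Function.comp_apply,
      unstackBox_stackBox hp.1]
  · rw [stack_eq_comp, unstack_eq_comp, Function.comp_apply, Function.comp_apply,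
      stackBox_unstackBox hq]

theorem stmt6 (n ℓ : ℕ) (lam : ℕ → ℕ)
    -- λ = ((λ_1, ..., λ_ℓ), ∅) is a bipartition of n:
    (hpos : ∀ a, 1 ≤ a → a ≤ ℓ → 1 ≤ lam a)
    (hanti : ∀ a, 1 ≤ a → lam (a + 1) ≤ lam a)
    (hzero : ∀ a, ℓ < a → lam a = 0)
    (hsize : ∑ a ∈ Finset.Icc 1 ℓ, lam a = n)
    -- μ is a bicomposition and g is the recording map of the standard tableau t^μ:
    -- g j is the letter i_k such that j lies in row i of component k of t^μ
    (μ1 μ2 : ℕ → ℕ) (g : ℕ → ℕ × Fin 2)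
    (hg0 : ∀ j, 1 ≤ j → j ≤ n → ∀ i : ℕ,
      (g j = (i, 0) ↔
        (∑ i' ∈ Finset.Icc 1 (i - 1), μ1 i') < j ∧ j ≤ ∑ i' ∈ Finset.Icc 1 i, μ1 i'))
    (hg1 : ∀ j, 1 ≤ j → j ≤ n → ∀ i : ℕ,
      (g j = (i, 1) ↔
        ((∑ i' ∈ Finset.Icc 1 n, μ1 i') + ∑ i' ∈ Finset.Icc 1 (i - 1), μ2 i') < j ∧
          j ≤ (∑ i' ∈ Finset.Icc 1 n, μ1 i') + ∑ i' ∈ Finset.Icc 1 i, μ2 i'))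
    -- S is a semistandard tableau of shape λ and type μ:
    (S : ℕ × ℕ → ℕ × Fin 2)
    (hS : IsSemistdTab lam ℓ S)
    (hStype0 : ∀ i, Set.ncard {p | IsBox lam ℓ p ∧ S p = (i, 0)} = μ1 i)
    (hStype1 : ∀ i, Set.ncard {p | IsBox lam ℓ p ∧ S p = (i, 1)} = μ2 i) :
    -- unstacking maps standard tableaux of shape λ recording to S to standard tableaux
    -- of shape U(λ) recording to U(S), and stacking is a two-sided inverse:
    (∀ s : ℕ × ℕ → ℕ,
      IsStdTab lam ℓ n s → (∀ p, IsBox lam ℓ p → g (s p) = S p) →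
      (IsStdBTab (Ushape lam) n (unstack s) ∧
        ∀ q, IsBBox (Ushape lam) q → g (unstack s q) = unstack S q)) ∧
    (∀ s' : (ℕ × ℕ) × Fin 2 → ℕ,
      IsStdBTab (Ushape lam) n s' → (∀ q, IsBBox (Ushape lam) q → g (s' q) = unstack S q) →
      (IsStdTab lam ℓ n (stack s') ∧ ∀ p, IsBox lam ℓ p → g (stack s' p) = S p)) ∧
    (∀ s : ℕ × ℕ → ℕ, IsStdTab lam ℓ n s →
      ∀ p, IsBox lam ℓ p → stack (unstack s) p = s p) ∧
    (∀ s' : (ℕ × ℕ) × Fin 2 → ℕ, IsStdBTab (Ushape lam) n s' →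
      ∀ q, IsBBox (Ushape lam) q → unstack (stack s') q = s' q) :=
  stmt6_general n ℓ lam hzero μ1 μ2 g hg0 hg1 S hS
end

section
/- Let b, b' be residue functions (functions U → Z_{≥0} recording box-residue multiplicities of bipartitions) with b' dominant (α_u^∨(b') ≥ 0 for all u) and b'(u) ≥ b(u) for all u. If a subcrystal C of the crystal of all bipartitions contains a bipartition λ with b_λ = b, then C contains a bipartition μ with b_μ = b' whose Young diagram contains that of λ. -/
/-! Suppose `b < b'` but `α_u^∨(b) ≤ 0` wherever `b u < b' u`, and let `u` maximize
`d = b' - b`. Since `α_u^∨(b') - α_u^∨(b) = d(qu) + d(q⁻¹u) - 2 d(u) ≥ 0`, maximality forces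
`d(qu) = d(q⁻¹u) = d(u)` and `α_u^∨(b) = 0`. So `d` is positive and constant on `q^ℤ u`, which
then lies in the finite support of `b'` and is a finite orbit. Summing `α^∨(b)` over it
telescopes to the number of points `Q`, `-1` in the orbit, which is positive since `u ∈ U`.
Hence some `f̃_u` always adds a box without leaving `b'`, and iterating climbs from `λ` to `b'`. -/

def alphaVee {k : Type*} [Field k] [DecidableEq k] (Q : k) (q : kˣ)
    (b : k →₀ ℕ) (u : k) : ℤ :=
  (b ((q : k) * u) : ℤ) + (b (((q⁻¹ : kˣ) : k) * u) : ℤ) - 2 * (b u : ℤ)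
    + (if u = -1 then 1 else 0) + (if u = Q then 1 else 0)

open Finset

lemma Relation.exists_reflTransGen_of_forall_exists_lt {α β : Type*} [PartialOrder β]
    (f : α → β) (C : Set α) (r : α → α → Prop) (top : β) (hfin : (Set.Iic top).Finite)
    (h : ∀ x ∈ C, f x ≤ top → f x ≠ top → ∃ y ∈ C, r x y ∧ f x < f y ∧ f y ≤ top)
    {x : α} (hx : x ∈ C) (hxtop : f x ≤ top) :
    ∃ y ∈ C, f y = top ∧ Relation.ReflTransGen r x y := by
  refine (hfin.wellFoundedOn (r := (· > ·))).induction hxtop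
    (P := fun c => ∀ x ∈ C, f x = c → ∃ y ∈ C, f y = top ∧ Relation.ReflTransGen r x y)
    ?_ x hx rfl
  rintro c hc ih x hx rfl
  by_cases hxeq : f x = top
  · exact ⟨x, hx, hxeq, .refl⟩
  obtain ⟨y, hy, hxy, hlt, hytop⟩ := h x hx hc hxeq
  obtain ⟨z, hz, hztop, hyz⟩ := ih (f y) hytop hlt y hy rfl
  exact ⟨z, hz, hztop, .head hxy hyz⟩

lemma Finsupp.add_single_one_le {ι : Type*} {b b' : ι →₀ ℕ} (hle : b ≤ b') {u : ι}
    (hu : b u < b' u) : b + Finsupp.single u 1 ≤ b' := fun v => by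
  rcases eq_or_ne u v with rfl | huv
  · simpa using hu
  · simpa [Finsupp.single_apply, huv] using hle v

section
variable {k : Type*} [Field k] [DecidableEq k] (Q : k) (q : kˣ)

lemma alphaVee_eq_add_alphaVee_zero (b : k →₀ ℕ) (u : k) :
    alphaVee Q q b u = b (q • u) + b (q⁻¹ • u) - 2 * b u + alphaVee Q q 0 u := by
  simp only [alphaVee, Units.smul_def, smul_eq_mul, Finsupp.coe_zero, Pi.zero_apply,
    Nat.cast_zero]
  ring

lemma alphaVee_zero_nonneg (u : k) : 0 ≤ alphaVee Q q 0 u := by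
  simp only [alphaVee]; split_ifs <;> simp

lemma alphaVee_zero_pos {u : k} (hu : u = Q ∨ u = -1) : 0 < alphaVee Q q 0 u := by
  simp only [alphaVee]; split_ifs <;> simp_all

lemma sum_alphaVee_pow_smul (b : k →₀ ℕ) {u : k} {n : ℕ} (hn : q ^ n • u = u) :
    ∑ m ∈ range n, alphaVee Q q b (q ^ m • u) = ∑ m ∈ range n, alphaVee Q q 0 (q ^ m • u) := by
  set G : ℕ → ℤ := fun m => b (q ^ m • u)
  set H : ℕ → ℤ := fun m => b (q⁻¹ • q ^ m • u)
  have hHG : ∀ m, H (m + 1) = G m := fun m => by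
    simp only [H, G, pow_succ', mul_smul, inv_smul_smul]
  have hterm : ∀ m, alphaVee Q q b (q ^ m • u)
      = (G (m + 1) - G m) - (H (m + 1) - H m) + alphaVee Q q 0 (q ^ m • u) := fun m => by
    rw [alphaVee_eq_add_alphaVee_zero, hHG]
    simp only [G, H, pow_succ', mul_smul]
    ring
  have hG : G n = G 0 := by simp only [G, hn, pow_zero, one_smul]
  have hH : H n = H 0 := by simp only [H, hn, pow_zero, one_smul]
  rw [sum_congr rfl fun m _ => hterm m, sum_add_distrib, sum_sub_distrib, sum_range_sub G,
    sum_range_sub H, hG, hH]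
  ring

lemma exists_pow_smul_eq_self {G X : Type*} [Group G] [MulAction G X] (g : G) {x : X}
    {s : Set X} (hs : s.Finite) (hx : ∀ m : ℕ, g ^ m • x ∈ s) : ∃ n > 0, g ^ n • x = x := by
  obtain ⟨a, c, hac, heq⟩ := hs.exists_lt_map_eq_of_forall_mem hx
  refine ⟨c - a, by omega, (smul_left_cancel_iff (g ^ a)).mp ?_⟩
  rw [smul_smul, pow_mul_pow_sub g hac.le, heq]

lemma sum_alphaVee_pow_smul_pos (b : k →₀ ℕ) {v : k} (hv : v = Q ∨ v = -1) {n : ℕ} (hn : 0 < n)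
    (hper : q ^ n • v = v) : 0 < ∑ m ∈ range n, alphaVee Q q b (q ^ m • v) := by
  rw [sum_alphaVee_pow_smul Q q b hper]
  refine sum_pos' (fun m _ => alphaVee_zero_nonneg Q q _) ⟨0, mem_range.mpr hn, ?_⟩
  simpa using alphaVee_zero_pos Q q hv

variable {Q q} {b b' : k →₀ ℕ}

lemma sub_smul_eq_and_alphaVee_eq_zero_of_isMax (hle : b ≤ b') {u : k}
    (hmax : ∀ v, b' v - b v ≤ b' u - b u) (hdom : 0 ≤ alphaVee Q q b' u)
    (hcon : alphaVee Q q b u ≤ 0) :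
    b' (q • u) - b (q • u) = b' u - b u ∧ b' (q⁻¹ • u) - b (q⁻¹ • u) = b' u - b u ∧
      alphaVee Q q b u = 0 := by
  rw [alphaVee_eq_add_alphaVee_zero] at hdom hcon ⊢
  have := hle (q • u); have := hle (q⁻¹ • u); have := hle u
  have := hmax (q • u); have := hmax (q⁻¹ • u)
  omega

lemma sub_zpow_smul_eq_of_isMax (hle : b ≤ b') (hdom : ∀ u, 0 ≤ alphaVee Q q b' u)
    (hcon : ∀ u, b u < b' u → alphaVee Q q b u ≤ 0) {u : k}
    (hmax : ∀ v, b' v - b v ≤ b' u - b u) (hpos : b u < b' u) (m : ℤ) :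
    b' (q ^ m • u) - b (q ^ m • u) = b' u - b u := by
  have hstep : ∀ w, b' w - b w = b' u - b u →
      b' (q • w) - b (q • w) = b' u - b u ∧ b' (q⁻¹ • w) - b (q⁻¹ • w) = b' u - b u :=
    fun w hw => by
      obtain ⟨h₁, h₂, -⟩ := sub_smul_eq_and_alphaVee_eq_zero_of_isMax hle (hw ▸ hmax) (hdom w)
        (hcon w (by omega))
      exact ⟨h₁.trans hw, h₂.trans hw⟩
  induction m using Int.induction_on with
  | zero => simp
  | succ i ih => rw [add_comm, zpow_one_add, mul_smul]; exact (hstep _ ih).1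
  | pred i ih => rw [zpow_sub_one, mul_comm, mul_smul]; exact (hstep _ ih).2

lemma exists_lt_alphaVee_pos
    (hsupp : ∀ u ∈ b'.support, ∃ j : ℤ, u = Q * ((q ^ j : kˣ) : k) ∨ u = -((q ^ j : kˣ) : k))
    (hdom : ∀ u, 0 ≤ alphaVee Q q b' u) (hlt : b < b') :
    ∃ u, b u < b' u ∧ 0 < alphaVee Q q b u := by
  by_contra! hcon
  obtain ⟨u, hu, hmax⟩ := (b' - b).support.exists_max_image (b' - b)
    (Finsupp.support_nonempty_iff.mpr (tsub_pos_of_lt hlt).ne')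
  simp only [Finsupp.mem_support_iff, Finsupp.tsub_apply, ne_eq] at hu hmax
  replace hmax : ∀ v, b' v - b v ≤ b' u - b u := fun v => by
    by_cases hv : b' v - b v = 0
    · omega
    · exact hmax v hv
  have horbit := sub_zpow_smul_eq_of_isMax hlt.le hdom hcon hmax (by omega)
  obtain ⟨j, v, hv, rfl⟩ : ∃ j : ℤ, ∃ v, (v = Q ∨ v = -1) ∧ u = q ^ j • v := by
    obtain ⟨j, hj | hj⟩ := hsupp u (Finsupp.mem_support_iff.mpr (by omega))
    · exact ⟨j, Q, .inl rfl, by rw [hj, Units.smul_def, smul_eq_mul, mul_comm]⟩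
    · exact ⟨j, -1, .inr rfl, by rw [hj, smul_neg, Units.smul_def, smul_eq_mul, mul_one]⟩
  have hvorbit : ∀ m : ℕ, b (q ^ m • v) < b' (q ^ m • v) ∧ alphaVee Q q b (q ^ m • v) = 0 := by
    intro m
    have hw : q ^ m • v = q ^ ((m : ℤ) - j) • q ^ j • v := by
      rw [smul_smul, ← zpow_add, sub_add_cancel, zpow_natCast]
    have hwmax := horbit ((m : ℤ) - j)
    rw [← hw] at hwmax
    have hlt' : b (q ^ m • v) < b' (q ^ m • v) := by omega
    exact ⟨hlt', (sub_smul_eq_and_alphaVee_eq_zero_of_isMax hlt.le (hwmax ▸ hmax) (hdom _)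
      (hcon _ hlt')).2.2⟩
  obtain ⟨n, hn, hper⟩ := exists_pow_smul_eq_self q b'.support.finite_toSet
    fun m => Finsupp.mem_support_iff.mpr (pos_of_gt (hvorbit m).1).ne'
  have hsum := sum_alphaVee_pow_smul_pos Q q b hv hn hper
  rw [sum_eq_zero fun m _ => (hvorbit m).2] at hsum
  exact hsum.false

end

theorem stmt17_general (k : Type*) [Field k] [DecidableEq k] (Q : k) (q : kˣ)
    (U : Set k) (hU : U = {x : k | ∃ m : ℤ, x = Q * ((q ^ m : kˣ) : k) ∨
      x = -((q ^ m : kˣ) : k)})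
    (Bip : Type*)
    (bfun : Bip → (k →₀ ℕ))               -- the residue function λ ↦ b_λ
    (contains : Bip → Bip → Prop)          -- `contains x y`: diagram of x ⊆ diagram of y
    (hrefl : ∀ x, contains x x)
    (htrans : ∀ x y z, contains x y → contains y z → contains x z)
    -- C is a subcrystal: closed under the Kashiwara operators; in particular, whenever
    -- α_u^∨(b_λ) > 0 (an uncancelled addable box of residue u exists), f̃_u λ ∈ C adds
    -- one box of residue u to the diagram:
    (C : Set Bip)
    (hstep : ∀ x ∈ C, ∀ u ∈ U, 0 < alphaVee Q q (bfun x) u →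
      ∃ y ∈ C, contains x y ∧ bfun y = bfun x + Finsupp.single u 1)
    -- b' is a dominant residue function supported on U with b' ≥ b = b_λ pointwise:
    (b' : k →₀ ℕ) (hb'supp : ↑b'.support ⊆ U)
    (hdom : ∀ u : k, 0 ≤ alphaVee Q q b' u)
    (lam : Bip) (hlam : lam ∈ C)
    (hge : ∀ u : k, bfun lam u ≤ b' u) :
    ∃ mu ∈ C, bfun mu = b' ∧ contains lam mu := by
  subst hU
  have hgrow : ∀ x ∈ C, bfun x ≤ b' → bfun x ≠ b' →
      ∃ y ∈ C, contains x y ∧ bfun x < bfun y ∧ bfun y ≤ b' := by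
    intro x hx hle hne
    obtain ⟨u, hu, hpos⟩ :=
      exists_lt_alphaVee_pos (fun u hu => hb'supp hu) hdom (hle.lt_of_ne hne)
    obtain ⟨y, hy, hxy, hby⟩ :=
      hstep x hx u (hb'supp (Finsupp.mem_support_iff.mpr (pos_of_gt hu).ne')) hpos
    refine ⟨y, hy, hxy, hby ▸ ?_, hby ▸ Finsupp.add_single_one_le hle hu⟩
    exact lt_add_of_pos_right _ (pos_iff_ne_zero.mpr (Finsupp.single_ne_zero.mpr one_ne_zero))
  obtain ⟨mu, hmu, hbmu, hpath⟩ := Relation.exists_reflTransGen_of_forall_exists_lt bfun C contains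
    b' (Set.finite_Iic b') hgrow hlam hge
  refine ⟨mu, hmu, hbmu, ?_⟩
  clear hmu hbmu
  induction hpath with
  | refl => exact hrefl _
  | tail _ hyz ih => exact htrans _ _ _ ih hyz

theorem stmt17 (k : Type*) [Field k] [DecidableEq k] (Q : k) (q : kˣ)
    (U : Set k) (hU : U = {x : k | ∃ m : ℤ, x = Q * ((q ^ m : kˣ) : k) ∨
      x = -((q ^ m : kˣ) : k)})
    (Bip : Type*)
    (bfun : Bip → (k →₀ ℕ))               -- the residue function λ ↦ b_λ
    (contains : Bip → Bip → Prop)          -- `contains x y`: diagram of x ⊆ diagram of y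
    (hrefl : ∀ x, contains x x)
    (htrans : ∀ x y z, contains x y → contains y z → contains x z)
    (hsupp : ∀ x : Bip, ↑(bfun x).support ⊆ U)
    -- C is a subcrystal: closed under the Kashiwara operators; in particular, whenever
    -- α_u^∨(b_λ) > 0 (an uncancelled addable box of residue u exists), f̃_u λ ∈ C adds
    -- one box of residue u to the diagram:
    (C : Set Bip)
    (hstep : ∀ x ∈ C, ∀ u ∈ U, 0 < alphaVee Q q (bfun x) u →
      ∃ y ∈ C, contains x y ∧ bfun y = bfun x + Finsupp.single u 1)
    -- b' is a dominant residue function supported on U with b' ≥ b = b_λ pointwise: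
    (b' : k →₀ ℕ) (hb'supp : ↑b'.support ⊆ U)
    (hdom : ∀ u : k, 0 ≤ alphaVee Q q b' u)
    (lam : Bip) (hlam : lam ∈ C)
    (hge : ∀ u : k, bfun lam u ≤ b' u) :
    ∃ mu ∈ C, bfun mu = b' ∧ contains lam mu :=
  stmt17_general k Q q U hU Bip bfun contains hrefl htrans C hstep b' hb'supp hdom lam hlam hge
end
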